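/- Let m be a nonnegative integer, ε ∈ (0,1), λ > 0, and t₁ < t₂. Let ρ : [t₁, t₂] → ℝ be continuous with ρ(τ) ≥ ρ_min > 0 for all τ, and let 𝒳 : [t₁, t₂] → ℝ be continuously differentiable with 𝒳′(τ) ≥ 0 for all τ, 𝒳(t₁) = 4m+1 and 𝒳(t₂) = 4m+3. Then ∫_{t₁}^{t₂} (ρ(τ)·N(𝒳(τ))·𝒳′(τ) − 𝒳′(τ))·e^{λ(τ−t₂)} dτ ≤ −2ε·(ρ_min·cos((π/2)·ε)·exp((4m+2−ε)²) + 1)·e^{λ(t₁−t₂)}. -/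

import Mathlib

/-!
On `[t₁, t₂]` the path `𝒳` increases from `4m+1` to `4m+3`, where `cos (π/2 · s) ≤ 0`, so the
integrand `(ρ N(𝒳) - 1) 𝒳' e^{λ(τ-t₂)}` is nonpositive. It can therefore only grow when `ρ` is
replaced by `ρmin` and the weight by its minimum `e^{λ(t₁-t₂)}`. The substitution `u = 𝒳(τ)` turns
what is left into `∫_{4m+1}^{4m+3} (ρmin N(u) - 1) du`, and on the window `|u - (4m+2)| ≤ ε` one has
`N(u) ≤ -cos(πε/2) e^{(4m+2-ε)²}`.
-/

open Real

/-- The even smooth Nussbaum-type function `N(s) = exp(s²)·cos((π/2)·s)`. -/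
noncomputable def Nfun (s : ℝ) : ℝ := Real.exp (s ^ 2) * Real.cos (Real.pi / 2 * s)

open Set MeasureTheory

@[fun_prop]
theorem continuous_Nfun : Continuous Nfun := by
  unfold Nfun; fun_prop

theorem cos_half_pi_mul_nonpos {m : ℤ} {s : ℝ} (hs : s ∈ Icc (4 * m + 1 : ℝ) (4 * m + 3)) :
    cos (π / 2 * s) ≤ 0 := by
  have hπ := pi_pos
  have hperiod : π / 2 * s = π / 2 * (s - 4 * m) + m * (2 * π) := by ring
  rw [hperiod, cos_add_int_mul_two_pi]
  exact cos_nonpos_of_pi_div_two_le_of_le (by nlinarith [hs.1]) (by nlinarith [hs.2])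

theorem cos_half_pi_mul_le_neg_cos {m : ℤ} {ε s : ℝ} (hε : ε ≤ 2) (hs : |s - (4 * m + 2)| ≤ ε) :
    cos (π / 2 * s) ≤ -cos (π / 2 * ε) := by
  have hπ := pi_pos
  set z := π / 2 * (s - (4 * m + 2))
  have hperiod : π / 2 * s = z + π + m * (2 * π) := by ring
  have hz : |z| ≤ π / 2 * ε := by
    rw [abs_mul, abs_of_pos (half_pos hπ)]
    exact mul_le_mul_of_nonneg_left hs (half_pos hπ).le
  rw [hperiod, cos_add_int_mul_two_pi, cos_add_pi, neg_le_neg_iff, ← cos_abs z]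
  exact cos_le_cos_of_nonneg_of_le_pi (abs_nonneg z) (by nlinarith) hz

theorem Nfun_nonpos {m : ℤ} {s : ℝ} (hs : s ∈ Icc (4 * m + 1 : ℝ) (4 * m + 3)) : Nfun s ≤ 0 :=
  mul_nonpos_of_nonneg_of_nonpos (exp_pos _).le (cos_half_pi_mul_nonpos hs)

theorem Nfun_le_neg {m : ℕ} {ε s : ℝ} (hε : ε ≤ 1)
    (hs : s ∈ Icc (4 * m + 2 - ε : ℝ) (4 * m + 2 + ε)) :
    Nfun s ≤ -(cos (π / 2 * ε) * exp ((4 * m + 2 - ε) ^ 2)) := by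
  have hε₀ : 0 ≤ ε := by linarith [hs.1.trans hs.2]
  have hcos : 0 ≤ cos (π / 2 * ε) :=
    cos_nonneg_of_mem_Icc ⟨by nlinarith [pi_pos], by nlinarith [pi_pos]⟩
  have hexp : exp ((4 * m + 2 - ε) ^ 2) ≤ exp (s ^ 2) := by
    gcongr
    · linarith [(Nat.cast_nonneg m : (0 : ℝ) ≤ m)]
    · exact hs.1
  have hs' : |s - (4 * (m : ℤ) + 2)| ≤ ε := by
    push_cast; exact abs_sub_le_iff.2 ⟨by linarith [hs.2], by linarith [hs.1]⟩
  calc Nfun s ≤ exp (s ^ 2) * -cos (π / 2 * ε) :=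
        mul_le_mul_of_nonneg_left (cos_half_pi_mul_le_neg_cos (by linarith) hs') (exp_pos _).le
    _ ≤ -(cos (π / 2 * ε) * exp ((4 * m + 2 - ε) ^ 2)) := by nlinarith

theorem intervalIntegral.integral_le_neg_mul_of_nonpos {f : ℝ → ℝ} {a b c d C : ℝ}
    (hac : a ≤ c) (hcd : c ≤ d) (hdb : d ≤ b) (hf : IntervalIntegrable f volume a b)
    (hf₀ : ∀ x ∈ Icc a b, f x ≤ 0) (hC : ∀ x ∈ Icc c d, f x ≤ -C) :
    ∫ x in a..b, f x ≤ -(C * (d - c)) := by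
  have hab : a ≤ b := hac.trans (hcd.trans hdb)
  have hsub : ∀ {u v}, u ∈ Icc a b → v ∈ Icc a b → IntervalIntegrable f volume u v :=
    fun hu hv => hf.mono_set (uIcc_subset_uIcc (by rwa [uIcc_of_le hab]) (by rwa [uIcc_of_le hab]))
  have ha : a ∈ Icc a b := left_mem_Icc.2 hab
  have hb : b ∈ Icc a b := right_mem_Icc.2 hab
  have hc : c ∈ Icc a b := ⟨hac, hcd.trans hdb⟩
  have hd : d ∈ Icc a b := ⟨hac.trans hcd, hdb⟩
  have hleft : ∫ x in a..c, f x ≤ ∫ _ in a..c, (0 : ℝ) :=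
    integral_mono_on hac (hsub ha hc) intervalIntegrable_const
      fun x hx => hf₀ x ⟨hx.1, hx.2.trans hc.2⟩
  have hmid : ∫ x in c..d, f x ≤ ∫ _ in c..d, -C :=
    integral_mono_on hcd (hsub hc hd) intervalIntegrable_const hC
  have hright : ∫ x in d..b, f x ≤ ∫ _ in d..b, (0 : ℝ) :=
    integral_mono_on hdb (hsub hd hb) intervalIntegrable_const
      fun x hx => hf₀ x ⟨hd.1.trans hx.1, hx.2⟩
  rw [← integral_add_adjacent_intervals (hsub ha hc) (hsub hc hb),
    ← integral_add_adjacent_intervals (hsub hc hd) (hsub hd hb)]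
  simp only [integral_zero, integral_const, smul_eq_mul] at hleft hmid hright
  linarith

theorem integral_Nfun_le {m : ℕ} {ε : ℝ} (hε₀ : 0 ≤ ε) (hε₁ : ε ≤ 1) :
    ∫ u in (4 * m + 1 : ℝ)..(4 * m + 3), Nfun u ≤
      -(2 * ε * (cos (π / 2 * ε) * exp ((4 * m + 2 - ε) ^ 2))) := by
  refine (intervalIntegral.integral_le_neg_mul_of_nonpos (c := 4 * m + 2 - ε) (d := 4 * m + 2 + ε)
    (by linarith) (by linarith) (by linarith) (continuous_Nfun.intervalIntegrable _ _)
    (fun s hs => Nfun_nonpos (m := m) (by simpa using hs))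
    (fun s hs => Nfun_le_neg hε₁ hs)).trans_eq ?_
  ring

theorem integral_const_mul_Nfun_sub_one_le {m : ℕ} {ε ρ₀ : ℝ} (hε₀ : 0 ≤ ε) (hε₁ : ε ≤ 1)
    (hρ₀ : 0 ≤ ρ₀) :
    ∫ u in (4 * m + 1 : ℝ)..(4 * m + 3), (ρ₀ * Nfun u - 1) ≤
      -2 * ε * (ρ₀ * cos (π / 2 * ε) * exp ((4 * m + 2 - ε) ^ 2) + 1) := by
  have hN := mul_le_mul_of_nonneg_left (integral_Nfun_le (m := m) hε₀ hε₁) hρ₀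
  rw [intervalIntegral.integral_sub ((continuous_Nfun.intervalIntegrable _ _).const_mul ρ₀)
      intervalIntegrable_const, intervalIntegral.integral_const_mul,
    intervalIntegral.integral_const, smul_eq_mul]
  nlinarith

theorem mapsTo_Icc_of_deriv_nonneg {X : ℝ → ℝ} {a b : ℝ}
    (hX : DifferentiableOn ℝ X (Icc a b)) (hX' : ∀ x ∈ Ioo a b, 0 ≤ deriv X x) :
    MapsTo X (Icc a b) (Icc (X a) (X b)) := by
  refine (monotoneOn_of_deriv_nonneg (convex_Icc a b) hX.continuousOn ?_ ?_).mapsTo_Icc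
  · rw [interior_Icc]; exact hX.mono Ioo_subset_Icc_self
  · rwa [interior_Icc]

theorem intervalIntegrable_comp_mul_deriv_of_deriv_nonneg_Icc {X g : ℝ → ℝ}
    {a b : ℝ} (hab : a ≤ b) (hX : DifferentiableOn ℝ X (Icc a b))
    (hX' : ∀ x ∈ Ioo a b, 0 ≤ deriv X x) (hg : IntervalIntegrable g volume (X a) (X b)) :
    IntervalIntegrable (fun x => g (X x) * deriv X x) volume a b := by
  have hIoo : Ioo (min a b) (max a b) = Ioo a b := by rw [min_eq_left hab, max_eq_right hab]
  rw [← hIoo] at hX'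
  refine (intervalIntegral.integrable_comp_mul_deriv_iff_of_deriv_nonneg
    (hX.continuousOn.mono (uIcc_of_le hab).le) (fun x hx => ?_) hX').2 hg
  rw [hIoo] at hx
  exact (hX.differentiableAt (Icc_mem_nhds hx.1 hx.2)).hasDerivAt

theorem integral_comp_mul_deriv_of_deriv_nonneg_Icc {X g : ℝ → ℝ} {a b : ℝ}
    (hab : a ≤ b) (hX : DifferentiableOn ℝ X (Icc a b)) (hX' : ∀ x ∈ Ioo a b, 0 ≤ deriv X x) :
    ∫ x in a..b, g (X x) * deriv X x = ∫ u in X a..X b, g u := by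
  have hIoo : Ioo (min a b) (max a b) = Ioo a b := by rw [min_eq_left hab, max_eq_right hab]
  rw [← hIoo] at hX'
  refine intervalIntegral.integral_comp_mul_deriv_of_deriv_nonneg
    (hX.continuousOn.mono (uIcc_of_le hab).le) (fun x hx => ?_) hX'
  rw [hIoo] at hx
  exact (hX.differentiableAt (Icc_mem_nhds hx.1 hx.2)).hasDerivAt

theorem mul_sub_mul_le_of_nonpos {ρ ρ₀ n x w K : ℝ} (hρ : ρ₀ ≤ ρ) (hρ₀ : 0 ≤ ρ₀) (hn : n ≤ 0)
    (hx : 0 ≤ x) (hK : 0 ≤ K) (hKw : K ≤ w) : (ρ * n * x - x) * w ≤ (ρ₀ * n - 1) * x * K := by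
  have hneg : (ρ * n - 1) * x ≤ 0 := mul_nonpos_of_nonpos_of_nonneg (by nlinarith) hx
  calc (ρ * n * x - x) * w = (ρ * n - 1) * x * w := by ring
    _ ≤ (ρ * n - 1) * x * K := mul_le_mul_of_nonpos_left hKw hneg
    _ ≤ (ρ₀ * n - 1) * x * K := by
        gcongr (?_ - 1) * x * K; exact mul_le_mul_of_nonpos_right hρ hn

/-- Negative-excursion estimate (Case 1 of the paper's Nussbaum lemma): if `𝒳` increases
from `4m+1` to `4m+3` on `[t₁, t₂]`, then
`∫_{t₁}^{t₂} (ρ N(𝒳) 𝒳' − 𝒳') e^{λ(τ−t₂)} dτ ≤ −2ε(ρmin cos((π/2)ε) e^{(4m+2−ε)²} + 1) e^{λ(t₁−t₂)}`. -/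
theorem negative_excursion_estimate (m : ℕ) (ε : ℝ) (hε : ε ∈ Set.Ioo (0:ℝ) 1)
    (lam : ℝ) (hlam : 0 < lam) (t₁ t₂ : ℝ) (ht : t₁ < t₂) (ρ 𝒳 : ℝ → ℝ)
    (hρcont : ContinuousOn ρ (Set.Icc t₁ t₂)) (ρmin : ℝ) (hρmin : 0 < ρmin)
    (hρ : ∀ τ ∈ Set.Icc t₁ t₂, ρmin ≤ ρ τ)
    (h𝒳 : ContDiffOn ℝ 1 𝒳 (Set.Icc t₁ t₂))
    (h𝒳' : ∀ τ ∈ Set.Icc t₁ t₂, 0 ≤ deriv 𝒳 τ)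
    (h𝒳₁ : 𝒳 t₁ = 4 * (m:ℝ) + 1) (h𝒳₂ : 𝒳 t₂ = 4 * (m:ℝ) + 3) :
    (∫ τ in t₁..t₂, (ρ τ * Nfun (𝒳 τ) * deriv 𝒳 τ - deriv 𝒳 τ) * Real.exp (lam * (τ - t₂))) ≤
      -2 * ε * (ρmin * Real.cos (Real.pi / 2 * ε) * Real.exp ((4 * (m:ℝ) + 2 - ε) ^ 2) + 1) *
        Real.exp (lam * (t₁ - t₂)) := by
  obtain ⟨hε₀, hε₁⟩ := hε
  have hX := h𝒳.differentiableOn one_ne_zero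
  have hX' : ∀ τ ∈ Ioo t₁ t₂, 0 ≤ deriv 𝒳 τ := fun τ hτ => h𝒳' τ (Ioo_subset_Icc_self hτ)
  have hrange : MapsTo 𝒳 (Icc t₁ t₂) (Icc (4 * m + 1) (4 * m + 3)) :=
    h𝒳₁ ▸ h𝒳₂ ▸ mapsTo_Icc_of_deriv_nonneg hX hX'
  have hintegrable {g : ℝ → ℝ} (hg : Continuous g) :=
    intervalIntegrable_comp_mul_deriv_of_deriv_nonneg_Icc ht.le hX hX' (hg.intervalIntegrable _ _)
  have hw : ContinuousOn (fun τ => exp (lam * (τ - t₂))) (uIcc t₁ t₂) := by fun_prop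
  have hL : IntervalIntegrable (fun τ =>
      (ρ τ * Nfun (𝒳 τ) * deriv 𝒳 τ - deriv 𝒳 τ) * exp (lam * (τ - t₂))) volume t₁ t₂ := by
    convert ((hintegrable continuous_Nfun).continuousOn_mul
        ((uIcc_of_le ht.le ▸ hρcont).mul hw)).sub
      ((hintegrable (g := fun _ => 1) continuous_const).continuousOn_mul hw) using 1
    ext τ; simp only [Pi.mul_apply]; ring
  calc (∫ τ in t₁..t₂, (ρ τ * Nfun (𝒳 τ) * deriv 𝒳 τ - deriv 𝒳 τ) * exp (lam * (τ - t₂)))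
      ≤ ∫ τ in t₁..t₂, (ρmin * Nfun (𝒳 τ) - 1) * deriv 𝒳 τ * exp (lam * (t₁ - t₂)) :=
        intervalIntegral.integral_mono_on_of_le_Ioo ht.le hL
          ((hintegrable (g := fun u => ρmin * Nfun u - 1) (by fun_prop)).mul_const _) fun τ hτ =>
            mul_sub_mul_le_of_nonpos (hρ τ (Ioo_subset_Icc_self hτ)) hρmin.le
              (Nfun_nonpos (m := m) (by simpa using hrange (Ioo_subset_Icc_self hτ))) (hX' τ hτ)
              (exp_pos _).le (exp_le_exp.2 (by nlinarith [hτ.1]))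
    _ = (∫ u in (4 * m + 1 : ℝ)..(4 * m + 3), (ρmin * Nfun u - 1)) * exp (lam * (t₁ - t₂)) := by
        rw [intervalIntegral.integral_mul_const, integral_comp_mul_deriv_of_deriv_nonneg_Icc
          (g := fun u => ρmin * Nfun u - 1) ht.le hX hX', h𝒳₁, h𝒳₂]
    _ ≤ _ := mul_le_mul_of_nonneg_right
        (integral_const_mul_Nfun_sub_one_le hε₀.le hε₁.le hρmin.le) (exp_pos _).le
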